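/- Let q > t ≥ 2 be integers and 0 < ε < min{q/(2t), 1/2}. Let δ ∈ {0,1} with δ ≡ t (mod 2) and set t₁ = t−1+δ (the largest odd integer ≤ t). Then (q,t,ε) is a good triple if and only if 0 < ε < min{ q/(2t₁) − 1/2, q/(2t), 1/2 }. -/

import Mathlib

/-!
Write `a = (1-2ε)t'/(2q)` and `b = (1+2ε)t'/(2q)`, so the admissible window for `s` is
`(t'/2 - a, t'/2 + 1 - b)`. Since `t' < q` and `0 < ε < 1/2` we have `0 < a < 1/2` and `b < 1`.
For even `t'` the integer `t'/2` always lies in the window. For odd `t' = 2k+1` the window lies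
above `k`, so it contains an integer iff it contains `k+1`, i.e. iff `b < 1/2`, i.e.
`(1+2ε)t' < q`. This is monotone in `t'`, so only the largest odd `t₁ ≤ t` matters.
-/

/-- `(q,t,ε)` is a good triple: for every `2 ≤ t' ≤ t` there is an integer
`s ∈ [1,t']` with `t'/2 - (1-2ε)t'/(2q) < s < t'/2 + 1 - (1+2ε)t'/(2q)`. -/
def GoodTriple (q t : ℕ) (ε : ℝ) : Prop :=
  ∀ t' : ℕ, 2 ≤ t' → t' ≤ t →
    ∃ s : ℕ, 1 ≤ s ∧ s ≤ t' ∧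
      (t' : ℝ) / 2 - (1 - 2 * ε) * (t' : ℝ) / (2 * (q : ℝ)) < (s : ℝ) ∧
      (s : ℝ) < (t' : ℝ) / 2 + 1 - (1 + 2 * ε) * (t' : ℝ) / (2 * (q : ℝ))

def GoodAt (q : ℕ) (ε : ℝ) (t' : ℕ) : Prop :=
  ∃ s : ℕ, 1 ≤ s ∧ s ≤ t' ∧
    (t' : ℝ) / 2 - (1 - 2 * ε) * (t' : ℝ) / (2 * (q : ℝ)) < (s : ℝ) ∧
    (s : ℝ) < (t' : ℝ) / 2 + 1 - (1 + 2 * ε) * (t' : ℝ) / (2 * (q : ℝ))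

theorem goodTriple_iff_forall_goodAt {q t : ℕ} {ε : ℝ} :
    GoodTriple q t ε ↔ ∀ t', 2 ≤ t' → t' ≤ t → GoodAt q ε t' :=
  Iff.rfl

section GoodAt

variable {q k : ℕ} {ε : ℝ}

theorem goodAt_two_mul (hk : 0 < k) (hε : ε < 1 / 2) (hkq : 2 * k ≤ q) :
    GoodAt q ε (2 * k) := by
  have hkR : (1 : ℝ) ≤ k := by exact_mod_cast hk
  have hkqR : 2 * (k : ℝ) ≤ q := by exact_mod_cast hkq
  have hq : (0 : ℝ) < 2 * q := by linarith
  refine ⟨k, hk, by omega, ?_, ?_⟩ <;> push_cast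
  · have : 0 < (1 - 2 * ε) * (2 * k) / (2 * q) := by
      apply div_pos _ hq
      nlinarith
    linarith
  · have : (1 + 2 * ε) * (2 * k) / (2 * q) < 1 := by
      rw [div_lt_one hq]
      nlinarith
    linarith

theorem goodAt_two_mul_add_one_iff (hε0 : 0 ≤ ε) (hε : ε ≤ 1 / 2) (hkq : 2 * k + 1 ≤ q) :
    GoodAt q ε (2 * k + 1) ↔ (1 + 2 * ε) * (2 * k + 1 : ℕ) < q := by
  have hkqR : 2 * (k : ℝ) + 1 ≤ q := by exact_mod_cast hkq
  have hq : (0 : ℝ) < 2 * q := by linarith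
  push_cast
  constructor
  · rintro ⟨s, -, -, hlow, hupp⟩
    push_cast at hlow hupp
    have ha : (1 - 2 * ε) * (2 * k + 1) / (2 * q) ≤ 1 / 2 := by
      rw [div_le_iff₀ hq]
      nlinarith
    -- the window starts above `k`, so `s ≥ k + 1`
    have hks : (k : ℝ) + 1 ≤ s := by
      have : k < s := by exact_mod_cast (show (k : ℝ) < s by linarith)
      exact_mod_cast this
    have hb : (1 + 2 * ε) * (2 * k + 1) / (2 * q) < 1 / 2 := by linarith
    rw [div_lt_iff₀ hq] at hb
    linarith
  · intro hb
    refine ⟨k + 1, by omega, by omega, ?_, ?_⟩ <;> push_cast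
    · have : 0 ≤ (1 - 2 * ε) * (2 * k + 1) / (2 * q) := by
        apply div_nonneg _ hq.le
        nlinarith
      linarith
    · have : (1 + 2 * ε) * (2 * k + 1) / (2 * q) < 1 / 2 := by
        rw [div_lt_iff₀ hq]
        linarith
      linarith

end GoodAt

theorem goodTriple_iff_of_odd {q t T : ℕ} {ε : ℝ} (hε0 : 0 ≤ ε) (hε : ε < 1 / 2) (htq : t < q)
    (hT : Odd T) (hTt : T ≤ t) (htT : t ≤ T + 1) :
    GoodTriple q t ε ↔ (1 + 2 * ε) * T < q := by
  obtain ⟨k, rfl⟩ := hT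
  rw [goodTriple_iff_forall_goodAt]
  constructor
  · intro h
    rcases Nat.eq_zero_or_pos k with rfl | hk
    · have : (2 : ℝ) ≤ q := by exact_mod_cast (show 2 ≤ q by omega)
      push_cast
      linarith
    · exact (goodAt_two_mul_add_one_iff hε0 hε.le (by omega)).mp (h _ (by omega) hTt)
  · intro hlt t' h2 ht'
    obtain ⟨j, rfl | rfl⟩ := Nat.even_or_odd' t'
    · exact goodAt_two_mul (by omega) hε (by omega)
    · refine (goodAt_two_mul_add_one_iff hε0 hε.le (by omega)).mpr (lt_of_le_of_lt ?_ hlt)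
      gcongr
      linarith

theorem one_add_two_mul_mul_lt_iff {x y ε : ℝ} (hx : 0 < x) :
    (1 + 2 * ε) * x < y ↔ ε < y / (2 * x) - 1 / 2 := by
  rw [lt_sub_iff_add_lt, lt_div_iff₀ (by positivity)]
  constructor <;> intro h <;> linarith

theorem stmt7 (q t : ℕ) (ht : 2 ≤ t) (htq : t < q)
    (ε : ℝ) (hε0 : 0 < ε) (hε : ε < min ((q : ℝ) / (2 * (t : ℝ))) (1 / 2))
    (δ : ℕ) (hδ01 : δ = 0 ∨ δ = 1) (hδ : δ % 2 = t % 2) :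
    GoodTriple q t ε ↔
      (0 < ε ∧ ε < min ((q : ℝ) / (2 * ((t : ℝ) - 1 + (δ : ℝ))) - 1 / 2)
        (min ((q : ℝ) / (2 * (t : ℝ))) (1 / 2))) := by
  have hT : Odd (t - 1 + δ) := Nat.odd_iff.mpr (by omega)
  have hTcast : ((t - 1 + δ : ℕ) : ℝ) = (t : ℝ) - 1 + δ := by
    push_cast [Nat.cast_sub (show 1 ≤ t by omega)]
    ring
  have hTpos : (0 : ℝ) < (t - 1 + δ : ℕ) := by exact_mod_cast (show 0 < t - 1 + δ by omega)
  rw [goodTriple_iff_of_odd hε0.le (lt_of_lt_of_le hε (min_le_right _ _)) htq hT (by omega)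
    (by omega), one_add_two_mul_mul_lt_iff hTpos, hTcast]
  simp only [hε0, hε, lt_min_iff, true_and, and_true]
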